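/- Let Cl(p,q,r) be a Clifford algebra with n = p+q+r, M ∈ Cl^m(p,q,r), K ∈ Cl^k(p,q,r), and L ∈ Λ^{n−m}_r. If m is odd and k is even, or if m and n are even and k is odd, then (KL)M = M·α(KL), where α is the grade involution. -/

import Mathlib

open CliffordAlgebra

noncomputable section

/-- Diagonal weights: `p` entries `+1`, `q` entries `-1`, `r` entries `0`. -/
def cliffSig (p q : ℕ) (i : ℕ) : ℝ := if i < p then 1 else if i < p + q then -1 else 0

/-- The quadratic form of signature `(p, q, r)` on `ℝ^(p+q+r)`. -/
def Qf (p q r : ℕ) : QuadraticForm ℝ (Fin (p + q + r) → ℝ) :=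
  QuadraticMap.weightedSumSquares ℝ (fun i : Fin (p + q + r) => cliffSig p q (i : ℕ))

/-- The `i`-th generator `e_i` of `Cl(p,q,r)`. -/
def gen (p q r : ℕ) (i : Fin (p + q + r)) : CliffordAlgebra (Qf p q r) :=
  ι (Qf p q r) (Pi.single i 1)

/-- The grade-`m` subspace `Cl^m(p,q,r)`: span of products of `m` distinct generators
with increasing indices. -/
def gradeSubspace (p q r m : ℕ) : Submodule ℝ (CliffordAlgebra (Qf p q r)) :=
  Submodule.span ℝ {x | ∃ l : List (Fin (p + q + r)),
    l.Chain' (· < ·) ∧ l.length = m ∧ x = (l.map (gen p q r)).prod}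

/-- `Λ_r`: the subalgebra generated by the `r` null generators. -/
def LambdaR (p q r : ℕ) : Subalgebra ℝ (CliffordAlgebra (Qf p q r)) :=
  Algebra.adjoin ℝ {x | ∃ i : Fin (p + q + r), p + q ≤ (i : ℕ) ∧ x = gen p q r i}

/-- `Λ^d_r`: the degree-`d` component of `Λ_r`. -/
def LambdaDeg (p q r d : ℕ) : Submodule ℝ (CliffordAlgebra (Qf p q r)) :=
  Submodule.span ℝ {x | ∃ l : List (Fin (p + q + r)),
    l.Chain' (· < ·) ∧ l.length = d ∧ (∀ i ∈ l, p + q ≤ (i : ℕ)) ∧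
    x = (l.map (gen p q r)).prod}

/-- The pseudoscalar `e_1 ⋯ e_n`. -/
def pseudoscalar (p q r : ℕ) : CliffordAlgebra (Qf p q r) :=
  ((List.finRange (p + q + r)).map (gen p q r)).prod

/-!
By trilinearity it suffices to treat blades `K = e_K`, `L = e_L`, `M = e_M`. Distinct generators
anticommute, so a generator `e_j` moves past a blade `e_l` at the cost of the sign
`(-1)^(|l| - #{j in l})`. If `L` shares an index with `K` or with `M`, that index is null and both
sides vanish. Otherwise `M` and `L` together use every index exactly once, so each generator of `K`
moves past `e_M e_L` with sign `(-1)^(n-1)`. Both sides then become signed multiples of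
`e_M e_L e_K`, with signs `(-1)^(dm + k(n-1))` and `(-1)^(k + d + kd)` where `d = n - m`, and the
parity hypotheses on `m`, `n`, `k` make them agree.
-/

section AnticommutingFamily

variable {R A ι : Type*} [CommRing R] [Ring A] [Algebra R A] {e : ι → A}

theorem prod_map_mul_eq_of_forall_mul_eq {u : List ι} {x : A} {s : ℕ}
    (h : ∀ a ∈ u, e a * x = (-1 : R) ^ s • (x * e a)) :
    (u.map e).prod * x = (-1 : R) ^ (u.length * s) • (x * (u.map e).prod) := by
  induction u with
  | nil => simp
  | cons a u ih =>
    rw [List.map_cons, List.prod_cons, mul_assoc, ih fun b hb => h b (List.mem_cons_of_mem a hb),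
      mul_smul_comm, ← mul_assoc, h a List.mem_cons_self, smul_mul_assoc, smul_smul, ← pow_add,
      List.length_cons, mul_assoc]
    ring_nf

variable [DecidableEq ι]

theorem mul_prod_map_of_anticomm (he : ∀ i j, i ≠ j → e i * e j = -(e j * e i))
    (j : ι) (l : List ι) :
    e j * (l.map e).prod = (-1 : R) ^ (l.length - l.count j) • ((l.map e).prod * e j) := by
  induction l with
  | nil => simp
  | cons a l ih =>
    have hcount := l.count_le_length (a := j)
    rw [List.map_cons, List.prod_cons, ← mul_assoc]
    rcases eq_or_ne j a with rfl | hja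
    · rw [mul_assoc, ih, mul_smul_comm, List.count_cons_self, List.length_cons, ← mul_assoc]
      congr 2; omega
    · rw [he j a hja, neg_mul, mul_assoc, ih, mul_smul_comm, ← mul_assoc,
        List.count_cons_of_ne (Ne.symm hja), List.length_cons, Nat.sub_add_comm hcount, pow_succ,
        mul_neg_one, neg_smul, ← smul_neg]

theorem prod_map_mul_prod_map_of_disjoint (he : ∀ i j, i ≠ j → e i * e j = -(e j * e i))
    {u w : List ι} (h : u.Disjoint w) :
    (u.map e).prod * (w.map e).prod
      = (-1 : R) ^ (u.length * w.length) • ((w.map e).prod * (u.map e).prod) :=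
  prod_map_mul_eq_of_forall_mul_eq fun a ha => by
    rw [mul_prod_map_of_anticomm (R := R) he, List.count_eq_zero_of_not_mem (h ha), Nat.sub_zero]

theorem prod_map_mul_prod_map_of_count_eq_one (he : ∀ i j, i ≠ j → e i * e j = -(e j * e i))
    {u w : List ι} (h : ∀ a ∈ u, w.count a = 1) :
    (u.map e).prod * (w.map e).prod
      = (-1 : R) ^ (u.length * (w.length - 1)) • ((w.map e).prod * (u.map e).prod) :=
  prod_map_mul_eq_of_forall_mul_eq fun a ha => by
    rw [mul_prod_map_of_anticomm (R := R) he, h a ha]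

theorem mul_prod_map_eq_zero_of_mem (he : ∀ i j, i ≠ j → e i * e j = -(e j * e i))
    {j : ι} (hj : e j * e j = 0) {l : List ι} (hl : j ∈ l) : e j * (l.map e).prod = 0 := by
  obtain ⟨l₁, l₂, rfl⟩ := List.append_of_mem hl
  rw [List.map_append, List.prod_append, List.map_cons, List.prod_cons, ← mul_assoc, ← mul_assoc,
    mul_prod_map_of_anticomm (R := ℤ) he, smul_mul_assoc, mul_assoc _ (e j), hj, mul_zero,
    smul_zero, zero_mul]

theorem prod_map_mul_prod_map_eq_zero (he : ∀ i j, i ≠ j → e i * e j = -(e j * e i))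
    {j : ι} (hj : e j * e j = 0) {u w : List ι} (hu : j ∈ u) (hw : j ∈ w) :
    (u.map e).prod * (w.map e).prod = 0 := by
  obtain ⟨u₁, u₂, rfl⟩ := List.append_of_mem hu
  rw [List.map_append, List.prod_append, List.map_cons, List.prod_cons, mul_assoc, mul_assoc,
    ← List.prod_append, ← List.map_append,
    mul_prod_map_eq_zero_of_mem he hj (List.mem_append_right u₂ hw), mul_zero]

end AnticommutingFamily

theorem QuadraticMap.isOrtho_weightedSumSquares_single {R ι : Type*} [CommRing R] [Fintype ι]
    [DecidableEq ι] (w : ι → R) {i j : ι} (hij : i ≠ j) (a b : R) :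
    (weightedSumSquares R w).IsOrtho (Pi.single i a) (Pi.single j b) := by
  rw [isOrtho_def]
  simp only [weightedSumSquares_apply, ← Finset.sum_add_distrib]
  refine Finset.sum_congr rfl fun t _ => ?_
  rcases eq_or_ne t i with rfl | hti
  · simp [hij]
  · simp [hti]

theorem CliffordAlgebra.mul_mul_eq_mul_involute_of_mem_span {R M : Type*} [CommRing R]
    [AddCommGroup M] [Module R M] {Q : QuadraticForm R M} {S T U : Set (CliffordAlgebra Q)}
    (h : ∀ K ∈ S, ∀ L ∈ T, ∀ N ∈ U, K * L * N = N * involute (K * L))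
    {K L N : CliffordAlgebra Q} (hK : K ∈ Submodule.span R S) (hL : L ∈ Submodule.span R T)
    (hN : N ∈ Submodule.span R U) :
    K * L * N = N * involute (K * L) := by
  induction hL using Submodule.span_induction with
  | zero => simp
  | add a b _ _ iha ihb => rw [mul_add, add_mul, map_add, mul_add, iha, ihb]
  | smul c a _ ih => rw [mul_smul_comm, smul_mul_assoc, map_smul, mul_smul_comm, ih]
  | mem L hL =>
  induction hK using Submodule.span_induction with
  | zero => simp
  | add a b _ _ iha ihb => rw [add_mul, add_mul, map_add, mul_add, iha, ihb]
  | smul c a _ ih => rw [smul_mul_assoc, smul_mul_assoc, map_smul, mul_smul_comm, ih]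
  | mem K hK =>
  induction hN using Submodule.span_induction with
  | zero => simp
  | add a b _ _ iha ihb => rw [mul_add, add_mul, iha, ihb]
  | smul c a _ ih => rw [mul_smul_comm, smul_mul_assoc, ih]
  | mem N hN => exact h K hK L hL N hN

theorem List.Nodup.mem_of_length_eq_card {α : Type*} [Fintype α] [DecidableEq α] {l : List α}
    (hl : l.Nodup) (hlen : l.length = Fintype.card α) (a : α) : a ∈ l := by
  rw [← List.mem_toFinset,
    l.toFinset.eq_univ_of_card (by rw [List.toFinset_card_of_nodup hl, hlen])]
  exact Finset.mem_univ a

theorem even_sign_exponent_iff {m k d n : ℕ} (hmd : m + d = n) (hkn : k ≤ n)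
    (h : (Odd m ∧ Even k) ∨ (Even m ∧ Even n ∧ Odd k)) :
    Even (d * m + k * (n - 1)) ↔ Even (k + d + k * d) := by
  rcases h with ⟨hm, hk⟩ | ⟨hm, hn, hk⟩
  · simp [Nat.even_add, Nat.even_mul, hk, Nat.not_even_iff_odd.mpr hm]
  · have hd : Even d := (Nat.even_add.mp (hmd ▸ hn)).mp hm
    have hn1 : ¬Even (n - 1) := by
      rw [Nat.even_sub (hk.pos.trans_le hkn)]
      simp [hn]
    simp [Nat.even_add, Nat.even_mul, hd, hn1, Nat.not_even_iff_odd.mpr hk]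

section Signature

variable {p q r : ℕ}

local notation:max "𝐞" l:max => List.prod (List.map (gen p q r) l)

theorem gen_mul_gen_of_ne (i j : Fin (p + q + r)) (hij : i ≠ j) :
    gen p q r i * gen p q r j = -(gen p q r j * gen p q r i) :=
  ι_mul_ι_comm_of_isOrtho (QuadraticMap.isOrtho_weightedSumSquares_single _ hij 1 1)

theorem gen_mul_self_of_null {i : Fin (p + q + r)} (hi : p + q ≤ (i : ℕ)) :
    gen p q r i * gen p q r i = 0 := by
  have hQ : Qf p q r (Pi.single i 1) = 0 := by
    simp [Qf, QuadraticMap.weightedSumSquares_apply, Pi.single_apply, cliffSig,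
      show ¬(i : ℕ) < p by omega, show ¬(i : ℕ) < p + q by omega]
  rw [gen, ι_sq_scalar, hQ, map_zero]

theorem involute_prod_map_gen (l : List (Fin (p + q + r))) :
    involute 𝐞 l = (-1 : ℝ) ^ l.length • 𝐞 l := by
  have h := involute_prod_map_ι (Q := Qf p q r) (l.map (Pi.single · 1))
  rwa [List.map_map, List.length_map] at h

theorem involute_prod_map_gen_mul (u w : List (Fin (p + q + r))) :
    involute (𝐞 u * 𝐞 w) = (-1 : ℝ) ^ (u.length + w.length) • (𝐞 u * 𝐞 w) := by
  rw [map_mul, involute_prod_map_gen, involute_prod_map_gen, smul_mul_smul_comm, ← pow_add]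

theorem blade_mul_mul_eq_mul_involute_of_disjoint {lK lL lM : List (Fin (p + q + r))}
    (hKL : lK.Disjoint lL) (hMLnd : (lM ++ lL).Nodup) (hMLlen : (lM ++ lL).length = p + q + r)
    (hsign : Even (lL.length * lM.length + lK.length * (p + q + r - 1)) ↔
      Even (lK.length + lL.length + lK.length * lL.length)) :
    𝐞 lK * 𝐞 lL * 𝐞 lM = 𝐞 lM * involute (𝐞 lK * 𝐞 lL) := by
  have hfull (j : Fin (p + q + r)) : (lM ++ lL).count j = 1 :=
    List.count_eq_one_of_mem hMLnd (hMLnd.mem_of_length_eq_card (by simp [hMLlen]) j)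
  calc 𝐞 lK * 𝐞 lL * 𝐞 lM
      = (-1 : ℝ) ^ (lL.length * lM.length + lK.length * (p + q + r - 1)) •
          (𝐞 lM * 𝐞 lL * 𝐞 lK) := by
        rw [mul_assoc, prod_map_mul_prod_map_of_disjoint (R := ℝ) gen_mul_gen_of_ne
          (List.disjoint_of_nodup_append hMLnd).symm,
          mul_smul_comm, ← List.prod_append, ← List.map_append,
          prod_map_mul_prod_map_of_count_eq_one (R := ℝ) gen_mul_gen_of_ne fun j _ => hfull j,
          smul_smul, ← pow_add, hMLlen, List.map_append, List.prod_append]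
    _ = (-1 : ℝ) ^ (lK.length + lL.length + lK.length * lL.length) • (𝐞 lM * 𝐞 lL * 𝐞 lK) := by
        rw [neg_one_pow_congr hsign]
    _ = 𝐞 lM * involute (𝐞 lK * 𝐞 lL) := by
        rw [involute_prod_map_gen_mul,
          prod_map_mul_prod_map_of_disjoint (R := ℝ) gen_mul_gen_of_ne hKL, smul_smul, ← pow_add,
          mul_smul_comm, mul_assoc]

theorem blade_mul_mul_eq_mul_involute {m k : ℕ} {lK lL lM : List (Fin (p + q + r))}
    (hKnd : lK.Nodup) (hLnd : lL.Nodup) (hMnd : lM.Nodup) (hLnull : ∀ i ∈ lL, p + q ≤ (i : ℕ))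
    (hk : lK.length = k) (hm : lM.length = m) (hd : lL.length = p + q + r - m)
    (h : (Odd m ∧ Even k) ∨ (Even m ∧ Even (p + q + r) ∧ Odd k)) :
    𝐞 lK * 𝐞 lL * 𝐞 lM = 𝐞 lM * involute (𝐞 lK * 𝐞 lL) := by
  by_cases hKL : ∃ j ∈ lK, j ∈ lL
  · obtain ⟨j, hjK, hjL⟩ := hKL
    rw [prod_map_mul_prod_map_eq_zero gen_mul_gen_of_ne (gen_mul_self_of_null (hLnull j hjL))
      hjK hjL, zero_mul, map_zero, mul_zero]
  by_cases hML : ∃ j ∈ lM, j ∈ lL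
  · obtain ⟨j, hjM, hjL⟩ := hML
    have hnull := gen_mul_self_of_null (hLnull j hjL)
    rw [mul_assoc, prod_map_mul_prod_map_eq_zero gen_mul_gen_of_ne hnull hjL hjM, mul_zero,
      involute_prod_map_gen_mul, mul_smul_comm, ← mul_assoc, ← List.prod_append,
      ← List.map_append,
      prod_map_mul_prod_map_eq_zero gen_mul_gen_of_ne hnull (List.mem_append_left lK hjM) hjL,
      smul_zero]
  have hMLnd : (lM ++ lL).Nodup := hMnd.append hLnd fun j hjM hjL => hML ⟨j, hjM, hjL⟩
  have hMLlen : (lM ++ lL).length = p + q + r := by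
    have := hMLnd.length_le_card
    simp only [List.length_append, Fintype.card_fin] at this ⊢
    omega
  have hmd : m + (p + q + r - m) = p + q + r := by
    rwa [List.length_append, hm, hd] at hMLlen
  have hkn : k ≤ p + q + r := hk ▸ hKnd.length_le_card.trans_eq (Fintype.card_fin _)
  refine blade_mul_mul_eq_mul_involute_of_disjoint (fun j hjK hjL => hKL ⟨j, hjK, hjL⟩)
    hMLnd hMLlen ?_
  rw [hk, hm, hd]
  exact even_sign_exponent_iff hmd hkn h

end Signature

/-- For `M ∈ Cl^m`, `K ∈ Cl^k`, `L ∈ Λ^{n-m}_r`: if `m` is odd and `k` even, or `m, n` even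
and `k` odd, then `(KL)M = M·α(KL)`. -/
theorem stmt9 (p q r m k : ℕ) (M K L : CliffordAlgebra (Qf p q r))
    (hM : M ∈ gradeSubspace p q r m) (hK : K ∈ gradeSubspace p q r k)
    (hL : L ∈ LambdaDeg p q r (p + q + r - m))
    (h : (Odd m ∧ Even k) ∨ (Even m ∧ Even (p + q + r) ∧ Odd k)) :
    K * L * M = M * involute (K * L) := by
  have nodup_of_chain {l : List (Fin (p + q + r))} (hl : l.Chain' (· < ·)) : l.Nodup :=
    (List.isChain_iff_pairwise.mp hl).imp ne_of_lt
  refine mul_mul_eq_mul_involute_of_mem_span ?_ hK hL hM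
  rintro _ ⟨lK, hKc, hk, rfl⟩ _ ⟨lL, hLc, hd, hLnull, rfl⟩ _ ⟨lM, hMc, hm, rfl⟩
  exact blade_mul_mul_eq_mul_involute (nodup_of_chain hKc) (nodup_of_chain hLc)
    (nodup_of_chain hMc) hLnull hk hm hd h
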